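/- arXiv:1101.1200 — 4 statements merged into one kernel-verified Lean document; each statement's English description precedes it below -/
import Mathlib

section
/- Let Q be a Hopf algebra over ℂ with comultiplication Δ, counit ε, antipode κ, and let h : Q → ℂ be a left- and right-invariant linear functional (i.e. (h ⊗ id)∘Δ(a) = h(a)·1 = (id ⊗ h)∘Δ(a) for all a). Then for all a, b ∈ Q one has, in Sweedler notation, h(a·b₍₁₎)·κ(b₍₂₎) = h(a₍₁₎·b)·a₍₂₎. -/
open TensorProduct Coalgebra

set_option synthInstance.maxHeartbeats 1000000 in
/-- Lemma (Sweedler notation): for a Hopf algebra `Q` over `ℂ` with a left- and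
right-invariant functional `h`, one has `h(a·b₍₁₎)·κ(b₍₂₎) = h(a₍₁₎·b)·a₍₂₎`. -/
theorem invariant_functional_antipode_identity
    (Q : Type*) [Ring Q] [HopfAlgebra ℂ Q]
    (h : Q →ₗ[ℂ] ℂ)
    (h_left : ∀ a : Q,
      (TensorProduct.lid ℂ Q) ((TensorProduct.map h LinearMap.id) (comul a)) = h a • (1 : Q))
    (h_right : ∀ a : Q,
      (TensorProduct.rid ℂ Q) ((TensorProduct.map LinearMap.id h) (comul a)) = h a • (1 : Q))
    (a b : Q) :
    (TensorProduct.lid ℂ Q)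
        ((TensorProduct.map (h ∘ₗ LinearMap.mulLeft ℂ a) (HopfAlgebra.antipode (R := ℂ)))
          (comul b))
      = (TensorProduct.lid ℂ Q)
          ((TensorProduct.map (h ∘ₗ LinearMap.mulRight ℂ b) LinearMap.id) (comul a)) := by
  set S : Q →ₗ[ℂ] Q := HopfAlgebra.antipode (R := ℂ) with hS
  set μ : Q ⊗[ℂ] Q →ₗ[ℂ] Q := LinearMap.mul' ℂ Q with hμ
  -- Ψ z = lid ((h ⊗ id) (Δa * z))
  set Ψ : Q ⊗[ℂ] Q →ₗ[ℂ] Q :=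
    (TensorProduct.lid ℂ Q).toLinearMap ∘ₗ (TensorProduct.map h LinearMap.id) ∘ₗ
      LinearMap.mulLeft ℂ (comul a) with hΨ
  have Ψ_apply : ∀ w : Q ⊗[ℂ] Q,
      Ψ w = (TensorProduct.lid ℂ Q) ((TensorProduct.map h LinearMap.id) (comul a * w)) := by
    intro w; simp [hΨ]
  -- invariance: Ψ (Δ p) = h (a*p) • 1
  have Ψ_comul : ∀ p : Q, Ψ (comul p) = h (a * p) • (1 : Q) := by
    intro p
    rw [Ψ_apply, ← Bialgebra.comul_mul, h_left]
  -- multiplication lemma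
  have Lmul : ∀ (z : Q ⊗[ℂ] Q) (p u r : Q),
      (TensorProduct.lid ℂ Q) ((TensorProduct.map h LinearMap.id) (z * (p ⊗ₜ[ℂ] u))) * r
        = (TensorProduct.lid ℂ Q)
            ((TensorProduct.map h LinearMap.id) (z * (p ⊗ₜ[ℂ] (u * r)))) := by
    intro z
    induction z using TensorProduct.induction_on with
    | zero => simp
    | tmul x y =>
        intro p u r
        simp [Algebra.TensorProduct.tmul_mul_tmul, smul_mul_assoc, mul_assoc]
    | add z₁ z₂ ih₁ ih₂ =>
        intro p u r
        simp only [add_mul, map_add, add_mul, ih₁, ih₂]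
  have Ψmul : ∀ (p u r : Q), Ψ (p ⊗ₜ[ℂ] u) * r = Ψ (p ⊗ₜ[ℂ] (u * r)) := by
    intro p u r
    rw [Ψ_apply, Ψ_apply]; exact Lmul (comul a) p u r
  -- Step A : LHS = μ ((Ψ ⊗ S) ((Δ ⊗ id) (Δ b)))
  have stepA :
      (TensorProduct.lid ℂ Q)
          ((TensorProduct.map (h ∘ₗ LinearMap.mulLeft ℂ a) S) (comul b))
        = μ ((TensorProduct.map Ψ S) ((comul (R := ℂ)).rTensor Q (comul b))) := by
    have : ((TensorProduct.lid ℂ Q).toLinearMap ∘ₗ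
          TensorProduct.map (h ∘ₗ LinearMap.mulLeft ℂ a) S)
        = μ ∘ₗ (TensorProduct.map Ψ S) ∘ₗ (comul (R := ℂ)).rTensor Q := by
      apply TensorProduct.ext'
      intro p q
      simp only [LinearMap.comp_apply, LinearMap.rTensor_tmul, TensorProduct.map_tmul,
        LinearEquiv.coe_coe, hμ, LinearMap.mul'_apply, Ψ_comul, smul_mul_assoc, one_mul,
        TensorProduct.lid_tmul, LinearMap.mulLeft_apply]
    exact LinearMap.congr_fun this (comul b)
  -- coassociativity
  have coass : (comul (R := ℂ)).rTensor Q (comul b)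
      = (TensorProduct.assoc ℂ Q Q Q).symm ((comul (R := ℂ)).lTensor Q (comul b)) :=
    (Coalgebra.coassoc_symm_apply b).symm
  -- the auxiliary collapse lemma
  have laux : ∀ (p : Q) (z : Q ⊗[ℂ] Q),
      μ ((TensorProduct.map Ψ S) ((TensorProduct.assoc ℂ Q Q Q).symm (p ⊗ₜ[ℂ] z)))
        = Ψ (p ⊗ₜ[ℂ] (μ (S.lTensor Q z))) := by
    intro p z
    induction z using TensorProduct.induction_on with
    | zero =>
        rw [TensorProduct.tmul_zero, (TensorProduct.assoc ℂ Q Q Q).symm.map_zero]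
        simp
    | tmul u v =>
        simp only [TensorProduct.assoc_symm_tmul, TensorProduct.map_tmul,
          LinearMap.lTensor_tmul, hμ, LinearMap.mul'_apply]
        exact Ψmul p u (S v)
    | add z₁ z₂ ih₁ ih₂ =>
        simp only [TensorProduct.tmul_add, map_add, ih₁, ih₂]
  -- antipode collapse at comul q
  have antip : ∀ q : Q, μ (S.lTensor Q (comul q)) = counit (R := ℂ) q • (1 : Q) := by
    intro q
    rw [hμ, hS, HopfAlgebra.mul_antipode_lTensor_comul_apply, Algebra.algebraMap_eq_smul_one]
  -- step C: μ ((Ψ ⊗ S) (α⁻¹ ((id ⊗ Δ)(Δ b)))) = Ψ (b ⊗ₜ 1)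
  have stepC :
      μ ((TensorProduct.map Ψ S)
          ((TensorProduct.assoc ℂ Q Q Q).symm ((comul (R := ℂ)).lTensor Q (comul b))))
        = Ψ (b ⊗ₜ[ℂ] (1 : Q)) := by
    have maps : μ ∘ₗ (TensorProduct.map Ψ S) ∘ₗ
          (TensorProduct.assoc ℂ Q Q Q).symm.toLinearMap ∘ₗ (comul (R := ℂ)).lTensor Q
        = Ψ ∘ₗ LinearMap.lTensor Q
            ((Algebra.linearMap ℂ Q) ∘ₗ (counit (R := ℂ) (A := Q))) := by
      apply TensorProduct.ext'
      intro p q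
      simp only [LinearMap.comp_apply, LinearMap.lTensor_tmul, LinearEquiv.coe_coe]
      rw [laux p (comul q), antip q]
      simp [Algebra.algebraMap_eq_smul_one]
    have := LinearMap.congr_fun maps (comul b)
    simp only [LinearMap.comp_apply, LinearEquiv.coe_coe] at this
    rw [this]
    have hcounit : (LinearMap.lTensor Q ((Algebra.linearMap ℂ Q) ∘ₗ (counit (R := ℂ) (A := Q))))
        (comul b) = b ⊗ₜ[ℂ] (1 : Q) := by
      rw [LinearMap.lTensor_comp, LinearMap.comp_apply]
      have : (counit (R := ℂ) (A := Q)).lTensor Q (comul b) = b ⊗ₜ[ℂ] (1 : ℂ) :=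
        LinearMap.congr_fun (Coalgebra.lTensor_counit_comp_comul (R := ℂ) (A := Q)) b
      rw [this]
      simp
    rw [hcounit]
  -- final: Ψ (b ⊗ₜ 1) = RHS
  have stepD : Ψ (b ⊗ₜ[ℂ] (1 : Q))
      = (TensorProduct.lid ℂ Q)
          ((TensorProduct.map (h ∘ₗ LinearMap.mulRight ℂ b) LinearMap.id) (comul a)) := by
    rw [Ψ_apply]
    induction comul (R := ℂ) a using TensorProduct.induction_on with
    | zero => simp
    | tmul x y => simp [Algebra.TensorProduct.tmul_mul_tmul]
    | add z₁ z₂ ih₁ ih₂ => simp only [add_mul, map_add, ih₁, ih₂]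
  rw [stepA, coass, stepC, stepD]
end

section
/- In a von Neumann algebra (or in B(H)), for projections P and Q, the sequence ((PQ)ⁿ)ₙ converges in the strong operator topology to the projection P ∧ Q onto the intersection of the ranges of P and Q. -/
/-!
Write `T = PQ`. Pythagoras for `Q` and then for `P` gives
`‖x‖² - ‖Tx‖² = ‖x - Qx‖² + ‖Qx - PQx‖²`. Hence `T` fixes exactly `range P ∩ range Q`, and
`‖Tⁿ⁺¹x - Tⁿx‖² ≤ 2 (‖Tⁿx‖² - ‖Tⁿ⁺¹x‖²)` tends to `0` because `‖Tⁿx‖` decreases.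
For a contraction `T` of a Hilbert space, the orthogonal complement of the fixed subspace is the
closure of `range (T - 1)`; the powers `Tⁿ` tend to `0` on `range (T - 1)` by the previous
estimate, hence on its closure since the `Tⁿ` are equi-Lipschitz, and they fix the fixed subspace.
-/

open Filter Topology

namespace ContinuousLinearMap

variable {𝕜 E : Type*} [RCLike 𝕜]

section NormedSpace

variable [NormedAddCommGroup E] [NormedSpace 𝕜 E] {T : E →L[𝕜] E}

theorem tendsto_pow_succ_apply_sub_pow_apply_of_norm_sub_sq_le {C : ℝ} (hC : 0 < C)
    (hT : ∀ x, ‖T x - x‖ ^ 2 ≤ C * (‖x‖ ^ 2 - ‖T x‖ ^ 2)) (x : E) :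
    Tendsto (fun n ↦ (T ^ (n + 1)) x - (T ^ n) x) atTop (𝓝 0) := by
  set a : ℕ → ℝ := fun n ↦ ‖(T ^ n) x‖ ^ 2
  have hstep : ∀ n, ‖(T ^ (n + 1)) x - (T ^ n) x‖ ^ 2 ≤ C * (a n - a (n + 1)) := fun n ↦ by
    simpa only [a, pow_succ' T n, mul_apply_eq_comp] using hT ((T ^ n) x)
  have ha : Antitone a := antitone_nat_of_succ_le fun n ↦
    sub_nonneg.mp <| (mul_nonneg_iff_of_pos_left hC).mp <| (sq_nonneg _).trans (hstep n)
  have hlim := tendsto_atTop_ciInf ha ⟨0, by rintro _ ⟨n, rfl⟩; positivity⟩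
  have hdiff : Tendsto (fun n ↦ C * (a n - a (n + 1))) atTop (𝓝 0) := by
    simpa using (hlim.sub (hlim.comp (tendsto_add_atTop_nat 1))).const_mul C
  have hsq := squeeze_zero (fun n ↦ sq_nonneg _) hstep hdiff
  rw [tendsto_zero_iff_norm_tendsto_zero]
  simpa [Real.sqrt_sq (norm_nonneg _)] using hsq.sqrt

theorem isClosed_setOf_tendsto_pow_apply_zero (hT : ‖T‖ ≤ 1) :
    IsClosed {x | Tendsto (fun n ↦ (T ^ n) x) atTop (𝓝 0)} := by
  refine (LipschitzWith.uniformEquicontinuous (fun n ↦ ⇑(T ^ n)) 1 fun n ↦ ?_).equicontinuous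
    |>.isClosed_setOfPred_tendsto continuous_const
  rw [FunLike.coe_pow_eq_iterate]
  simpa using (T.lipschitz.weaken hT : LipschitzWith 1 T).iterate n

end NormedSpace

section InnerProductSpace

variable [NormedAddCommGroup E] [InnerProductSpace 𝕜 E] [CompleteSpace E] {T : E →L[𝕜] E}

theorem orthogonal_eqLocus_one_le_closure_range_sub_one (hT : ‖T‖ ≤ 1) :
    (T.eqLocus (1 : E →L[𝕜] E))ᗮ ≤ (T - 1).range.topologicalClosure := by
  rw [← Submodule.orthogonal_orthogonal_eq_closure]
  refine Submodule.orthogonal_le fun x hx ↦ eq_of_norm_le_re_inner_eq_norm_sq (𝕜 := 𝕜) ?_ ?_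
  · simpa using T.le_of_opNorm_le hT x
  · have hT_inner : ∀ y, inner 𝕜 (T y) x = inner 𝕜 y x := by
      simpa [Submodule.mem_orthogonal, inner_sub_left, sub_eq_zero] using hx
    simp [hT_inner]

theorem tendsto_pow_apply_starProjection_eqLocus (hT : ‖T‖ ≤ 1)
    (hT_reg : ∀ x, Tendsto (fun n ↦ (T ^ (n + 1)) x - (T ^ n) x) atTop (𝓝 0)) (x : E) :
    Tendsto (fun n ↦ (T ^ n) x) atTop (𝓝 ((T.eqLocus (1 : E →L[𝕜] E)).starProjection x)) := by
  set F := T.eqLocus (1 : E →L[𝕜] E)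
  have hfix : ∀ n, (T ^ n) (F.starProjection x) = F.starProjection x := fun n ↦ by
    have hT_fix : T (F.starProjection x) = F.starProjection x := by
      simpa using LinearMap.mem_eqLocus.mp (F.starProjection_apply_mem x)
    rw [FunLike.coe_pow_eq_iterate]
    exact Function.IsFixedPt.iterate hT_fix n
  have hperp : Tendsto (fun n ↦ (T ^ n) (Fᗮ.starProjection x)) atTop (𝓝 0) := by
    refine closure_minimal ?_ (isClosed_setOf_tendsto_pow_apply_zero hT)
      (orthogonal_eqLocus_one_le_closure_range_sub_one hT (Fᗮ.starProjection_apply_mem x))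
    rintro _ ⟨y, rfl⟩
    simpa [pow_succ, mul_apply_eq_comp] using hT_reg y
  have hsplit : ∀ n, (T ^ n) x = F.starProjection x + (T ^ n) (Fᗮ.starProjection x) := fun n ↦ by
    conv_lhs => rw [← F.starProjection_add_starProjection_orthogonal x]
    rw [map_add, hfix]
  simpa only [hsplit, add_zero] using tendsto_const_nhds.add hperp

end InnerProductSpace

end ContinuousLinearMap

namespace Submodule

variable {𝕜 E : Type*} [RCLike 𝕜] [NormedAddCommGroup E] [InnerProductSpace 𝕜 E]
variable (U V : Submodule 𝕜 E) [U.HasOrthogonalProjection] [V.HasOrthogonalProjection]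

theorem norm_sq_eq_norm_sq_starProjection_add_norm_sq_sub (x : E) :
    ‖x‖ ^ 2 = ‖U.starProjection x‖ ^ 2 + ‖x - U.starProjection x‖ ^ 2 := by
  rw [U.norm_sq_eq_add_norm_sq_starProjection x, starProjection_orthogonal_val]

theorem norm_sq_sub_norm_sq_starProjection_mul_apply (x : E) :
    ‖x‖ ^ 2 - ‖(U.starProjection * V.starProjection) x‖ ^ 2
      = ‖x - V.starProjection x‖ ^ 2
        + ‖V.starProjection x - U.starProjection (V.starProjection x)‖ ^ 2 := by
  rw [mul_apply_eq_comp, V.norm_sq_eq_norm_sq_starProjection_add_norm_sq_sub x,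
    U.norm_sq_eq_norm_sq_starProjection_add_norm_sq_sub (V.starProjection x)]
  ring

theorem eqLocus_starProjection_mul :
    (U.starProjection * V.starProjection).eqLocus (1 : E →L[𝕜] E) = U ⊓ V := by
  ext x
  simp only [LinearMap.mem_eqLocus, ContinuousLinearMap.coe_coe, one_apply_eq_self, mem_inf]
  constructor
  · intro hx
    have h := U.norm_sq_sub_norm_sq_starProjection_mul_apply V x
    rw [hx, sub_self, eq_comm, add_eq_zero_iff_of_nonneg (sq_nonneg _) (sq_nonneg _)] at h
    simp only [pow_eq_zero_iff two_ne_zero, norm_eq_zero, sub_eq_zero] at h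
    obtain ⟨hxV, hVU⟩ := h
    rw [← hxV] at hVU
    exact ⟨starProjection_eq_self_iff.mp hVU.symm, starProjection_eq_self_iff.mp hxV.symm⟩
  · rintro ⟨hU, hV⟩
    rw [mul_apply_eq_comp, starProjection_eq_self_iff.mpr hV, starProjection_eq_self_iff.mpr hU]

theorem norm_starProjection_mul_apply_sub_sq_le (x : E) :
    ‖(U.starProjection * V.starProjection) x - x‖ ^ 2
      ≤ 2 * (‖x‖ ^ 2 - ‖(U.starProjection * V.starProjection) x‖ ^ 2) := by
  rw [norm_sq_sub_norm_sq_starProjection_mul_apply, norm_sub_rev, mul_apply_eq_comp]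
  have := norm_sub_le_norm_sub_add_norm_sub x (V.starProjection x)
    (U.starProjection (V.starProjection x))
  nlinarith [norm_nonneg (x - U.starProjection (V.starProjection x)),
    sq_nonneg (‖x - V.starProjection x‖
      - ‖V.starProjection x - U.starProjection (V.starProjection x)‖)]

theorem tendsto_pow_starProjection_mul_apply [CompleteSpace E] [(U ⊓ V).HasOrthogonalProjection]
    (x : E) :
    Tendsto (fun n ↦ ((U.starProjection * V.starProjection) ^ n) x) atTop
      (𝓝 ((U ⊓ V).starProjection x)) := by
  have hnorm : ‖U.starProjection * V.starProjection‖ ≤ 1 := (norm_mul_le _ _).trans <|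
    mul_le_one₀ U.starProjection_norm_le (norm_nonneg _) V.starProjection_norm_le
  convert ContinuousLinearMap.tendsto_pow_apply_starProjection_eqLocus hnorm
    (ContinuousLinearMap.tendsto_pow_succ_apply_sub_pow_apply_of_norm_sub_sq_le two_pos
      (norm_starProjection_mul_apply_sub_sq_le U V)) x using 4
  exact (eqLocus_starProjection_mul U V).symm

end Submodule

/-- Von Neumann's alternating projection theorem: for orthogonal projections `P, Q` on a
complex Hilbert space `H`, `(PQ)ⁿ` converges strongly to the orthogonal projection onto
`range P ∩ range Q`. -/
theorem alternating_projections_SOT_convergence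
    (H : Type*) [NormedAddCommGroup H] [InnerProductSpace ℂ H] [CompleteSpace H]
    (P Q : H →L[ℂ] H)
    (hP_idem : IsIdempotentElem P) (hP_sa : IsSelfAdjoint P)
    (hQ_idem : IsIdempotentElem Q) (hQ_sa : IsSelfAdjoint Q)
    (K : Submodule ℂ H) [K.HasOrthogonalProjection]
    (hK : K = LinearMap.range (P : H →ₗ[ℂ] H) ⊓ LinearMap.range (Q : H →ₗ[ℂ] H)) :
    ∀ x : H, Tendsto (fun n : ℕ => ((P * Q) ^ n) x) atTop
      (𝓝 ((K.orthogonalProjectionOnto x : H))) := by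
  obtain ⟨_, hP⟩ := isStarProjection_iff_eq_starProjection_range.mp ⟨hP_idem, hP_sa⟩
  obtain ⟨_, hQ⟩ := isStarProjection_iff_eq_starProjection_range.mp ⟨hQ_idem, hQ_sa⟩
  subst hK
  intro x
  have h := Submodule.tendsto_pow_starProjection_mul_apply P.range Q.range x
  rwa [← hP, ← hQ] at h
end

section
/- Let O⁺(n) denote the *-algebra generated by self-adjoint elements x_{ij} (1 ≤ i,j ≤ n) with relations Σ_k x_{ki}x_{kj} = δ_{ij}·1 and Σ_k x_{ik}x_{jk} = δ_{ij}·1, with counit character ε(x_{ij}) = δ_{ij}. Then a linear functional η : O⁺(n) → ℂ satisfying η(ab) = η(a)ε(b) + ε(a)η(b) is determined by the matrix A = (η(x_{ij})), and A is necessarily antisymmetric: η(x_{ij}) = −η(x_{ji}); conversely every antisymmetric matrix A arises from a unique ε-derivation on the algebra. -/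
noncomputable section

/-- The orthogonality relations of the free orthogonal quantum group `O⁺(n)`:
`Σ_k x_{ki}x_{kj} = δ_{ij}` and `Σ_k x_{ik}x_{jk} = δ_{ij}`. -/
inductive FreeOrthRel (n : ℕ) : FreeAlgebra ℂ (Fin n × Fin n) → FreeAlgebra ℂ (Fin n × Fin n) → Prop
  | col (i j : Fin n) : FreeOrthRel n
      (∑ k : Fin n, FreeAlgebra.ι ℂ ((k, i) : Fin n × Fin n) * FreeAlgebra.ι ℂ ((k, j) : Fin n × Fin n))
      (if i = j then 1 else 0)
  | row (i j : Fin n) : FreeOrthRel n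
      (∑ k : Fin n, FreeAlgebra.ι ℂ ((i, k) : Fin n × Fin n) * FreeAlgebra.ι ℂ ((j, k) : Fin n × Fin n))
      (if i = j then 1 else 0)

/-- The free orthogonal quantum group algebra `O⁺(n)`. -/
abbrev FreeOrth (n : ℕ) := RingQuot (FreeOrthRel n)

/-- The generator `x_{ij}` of `O⁺(n)`. -/
def freeOrthX {n : ℕ} (i j : Fin n) : FreeOrth n :=
  RingQuot.mkAlgHom ℂ (FreeOrthRel n) (FreeAlgebra.ι ℂ (i, j))

/-!
An `ε`-derivation `η` is the same thing as an algebra map `a ↦ ε a + η a • δ` from `O⁺(n)` into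
the dual numbers `ℂ[δ]/(δ²)` lifting `ε`. Such a map is determined by the matrix `1 + A δ` of
images of the generators, and by the universal property of `O⁺(n)` it exists exactly when
`1 + A δ` is orthogonal. Since `δ² = 0`, `(1 + A δ)ᵀ (1 + A δ) = 1 + (Aᵀ + A) δ`, so this
happens exactly when `A` is antisymmetric.
-/

open TrivSqZeroExt Matrix

section DualNumberMatrix

variable {R : Type*} [CommRing R] {l m n : Type*}

theorem Matrix.map_inr_mul_map_inr [Fintype m] (A : Matrix l m R) (B : Matrix m n R) :
    A.map (inr : R → TrivSqZeroExt R R) * B.map (inr : R → TrivSqZeroExt R R) = 0 := by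
  ext i j : 1
  simp only [mul_apply, map_apply, inr_mul_inr, Finset.sum_const_zero, zero_apply]

theorem Matrix.map_inr_eq_zero_iff (A : Matrix m n R) :
    A.map (inr : R → TrivSqZeroExt R R) = 0 ↔ A = 0 := by
  rw [← Matrix.map_zero inr (inr_zero (R := R)), (Matrix.map_injective inr_injective).eq_iff]

variable [Fintype m] [DecidableEq m]

theorem Matrix.one_add_map_inr_transpose_mul_self_eq_one_iff (A : Matrix m m R) :
    (1 + A.map (inr : R → TrivSqZeroExt R R))ᵀ * (1 + A.map inr) = 1 ↔ Aᵀ = -A := by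
  have expand : (1 + A.map (inr : R → TrivSqZeroExt R R))ᵀ * (1 + A.map inr) =
      1 + (Aᵀ + A).map inr := by
    rw [transpose_add, transpose_one, ← transpose_map, add_mul, mul_add, mul_add,
      map_inr_mul_map_inr, Matrix.map_add _ (inr_add R)]
    simp only [one_mul, mul_one, add_zero]
    abel
  rw [expand, add_eq_left, map_inr_eq_zero_iff, add_eq_zero_iff_eq_neg]

theorem Matrix.one_add_map_inr_mul_transpose_self_eq_one_iff (A : Matrix m m R) :
    (1 + A.map (inr : R → TrivSqZeroExt R R)) * (1 + A.map inr)ᵀ = 1 ↔ Aᵀ = -A := by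
  have expand : (1 + A.map (inr : R → TrivSqZeroExt R R)) * (1 + A.map inr)ᵀ =
      1 + (A + Aᵀ).map inr := by
    rw [transpose_add, transpose_one, ← transpose_map, add_mul, mul_add, mul_add,
      map_inr_mul_map_inr, Matrix.map_add _ (inr_add R)]
    simp only [one_mul, mul_one, add_zero]
    abel
  rw [expand, add_eq_left, map_inr_eq_zero_iff, add_eq_zero_iff_neg_eq, eq_comm]

end DualNumberMatrix

section EpsDerivation

variable {R A : Type*} [CommRing R] [Semiring A] [Algebra R A]

def IsEpsDerivation (ε : A →ₐ[R] R) (η : A →ₗ[R] R) : Prop :=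
  ∀ a b, η (a * b) = η a * ε b + ε a * η b

variable {ε : A →ₐ[R] R} {η : A →ₗ[R] R}

theorem IsEpsDerivation.map_one_eq_zero (hη : IsEpsDerivation ε η) : η 1 = 0 := by
  simpa using hη 1 1

def IsEpsDerivation.toAlgHom (hη : IsEpsDerivation ε η) : A →ₐ[R] TrivSqZeroExt R R :=
  AlgHom.ofLinearMap (ε.toLinearMap.prod η)
    (TrivSqZeroExt.ext (map_one ε) hη.map_one_eq_zero)
    (fun a b => TrivSqZeroExt.ext (map_mul ε a b) <| show η (a * b) = ε a * η b + η a * ε b by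
      rw [hη]; ring)

@[simp]
theorem IsEpsDerivation.toAlgHom_apply (hη : IsEpsDerivation ε η) (a : A) :
    hη.toAlgHom a = (ε a, η a) :=
  rfl

theorem isEpsDerivation_sndHom_comp (Φ : A →ₐ[R] TrivSqZeroExt R R) :
    IsEpsDerivation ((fstHom R R R).comp Φ) (sndHom R R ∘ₗ Φ.toLinearMap) := fun a b => by
  simp only [LinearMap.coe_comp, AlgHom.coe_toLinearMap, Function.comp_apply, map_mul,
    sndHom_apply, snd_mul, smul_eq_mul, MulOpposite.smul_eq_mul_unop, MulOpposite.unop_op,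
    AlgHom.coe_comp, fstHom_apply]
  ring

end EpsDerivation

namespace FreeOrth

variable {n : ℕ} {B : Type*} [Semiring B] [Algebra ℂ B]

def generatorMatrix (n : ℕ) : Matrix (Fin n) (Fin n) (FreeOrth n) :=
  Matrix.of freeOrthX

theorem generatorMatrix_transpose_mul_self : (generatorMatrix n)ᵀ * generatorMatrix n = 1 := by
  ext i j
  have hrel := RingQuot.mkAlgHom_rel ℂ (FreeOrthRel.col (n := n) i j)
  simpa [generatorMatrix, freeOrthX, mul_apply, one_apply, apply_ite] using hrel

theorem map_generatorMatrix_transpose_mul_self (Φ : FreeOrth n →ₐ[ℂ] B) :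
    ((generatorMatrix n).map Φ)ᵀ * (generatorMatrix n).map Φ = 1 := by
  simpa [transpose_map] using congrArg Φ.mapMatrix generatorMatrix_transpose_mul_self

def lift (u : Matrix (Fin n) (Fin n) B) (hcol : uᵀ * u = 1) (hrow : u * uᵀ = 1) :
    FreeOrth n →ₐ[ℂ] B :=
  RingQuot.liftAlgHom ℂ ⟨FreeAlgebra.lift ℂ fun p => u p.1 p.2, by
    rintro _ _ (⟨i, j⟩ | ⟨i, j⟩)
    · simpa [mul_apply, one_apply, apply_ite] using congr_fun (congr_fun hcol i) j
    · simpa [mul_apply, one_apply, apply_ite] using congr_fun (congr_fun hrow i) j⟩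

@[simp]
theorem lift_freeOrthX (u : Matrix (Fin n) (Fin n) B) (hcol : uᵀ * u = 1) (hrow : u * uᵀ = 1)
    (i j : Fin n) : lift u hcol hrow (freeOrthX i j) = u i j := by
  simp [lift, freeOrthX]

theorem algHom_ext {f g : FreeOrth n →ₐ[ℂ] B}
    (h : ∀ i j, f (freeOrthX i j) = g (freeOrthX i j)) : f = g :=
  RingQuot.ringQuot_ext' _ _ _ <| FreeAlgebra.hom_ext <| funext fun p => h p.1 p.2

end FreeOrth

theorem IsEpsDerivation.map_toAlgHom_generatorMatrix {n : ℕ} {ε : FreeOrth n →ₐ[ℂ] ℂ}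
    {η : FreeOrth n →ₗ[ℂ] ℂ} (hε : ∀ i j : Fin n, ε (freeOrthX i j) = if i = j then 1 else 0)
    (hη : IsEpsDerivation ε η) :
    (FreeOrth.generatorMatrix n).map hη.toAlgHom =
      1 + (Matrix.of fun i j => η (freeOrthX i j)).map inr := by
  ext i j : 1
  apply TrivSqZeroExt.ext <;> simp [FreeOrth.generatorMatrix, hε, one_apply, apply_ite]

/-- On `O⁺(n)` with counit `ε(x_{ij}) = δ_{ij}`, every `ε`-derivation is determined by its
(necessarily antisymmetric) matrix of values on the generators, and conversely every
antisymmetric matrix arises from a unique `ε`-derivation. -/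
theorem freeOrth_eps_derivations_eq_antisymmetric_matrices
    (n : ℕ) (ε : FreeOrth n →ₐ[ℂ] ℂ)
    (hε : ∀ i j : Fin n, ε (freeOrthX i j) = if i = j then 1 else 0) :
    (∀ η : FreeOrth n →ₗ[ℂ] ℂ,
        (∀ a b : FreeOrth n, η (a * b) = η a * ε b + ε a * η b) →
        ∀ i j : Fin n, η (freeOrthX i j) = - η (freeOrthX j i)) ∧
    (∀ A : Matrix (Fin n) (Fin n) ℂ, A.transpose = -A →
        ∃! η : FreeOrth n →ₗ[ℂ] ℂ,
          (∀ a b : FreeOrth n, η (a * b) = η a * ε b + ε a * η b) ∧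
          ∀ i j : Fin n, η (freeOrthX i j) = A i j) := by
  refine ⟨fun η (hη : IsEpsDerivation ε η) i j => ?_, fun A hA => ?_⟩
  · have hanti := (one_add_map_inr_transpose_mul_self_eq_one_iff _).1 <|
      hη.map_toAlgHom_generatorMatrix hε ▸ FreeOrth.map_generatorMatrix_transpose_mul_self _
    simpa using congr_fun (congr_fun hanti j) i
  let Φ := FreeOrth.lift (1 + A.map inr) ((one_add_map_inr_transpose_mul_self_eq_one_iff A).2 hA)
    ((one_add_map_inr_mul_transpose_self_eq_one_iff A).2 hA)
  have hΦ : (fstHom ℂ ℂ ℂ).comp Φ = ε := FreeOrth.algHom_ext fun i j => by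
    simp [Φ, hε, one_apply, apply_ite]
  refine ⟨sndHom ℂ ℂ ∘ₗ Φ.toLinearMap, ⟨hΦ ▸ isEpsDerivation_sndHom_comp Φ, fun i j => ?_⟩, ?_⟩
  · simp [Φ, one_apply, apply_ite]
  rintro η ⟨hη : IsEpsDerivation ε η, hηA⟩
  have hηΦ : hη.toAlgHom = Φ := FreeOrth.algHom_ext fun i j => by
    apply TrivSqZeroExt.ext <;> simp [Φ, hε, hηA, one_apply, apply_ite]
  ext a
  exact congrArg snd (DFunLike.congr_fun hηΦ a)
end
end

section
/- Let O⁺(n) be the free orthogonal quantum group *-bialgebra with coproduct Δ(x_{ij}) = Σ_k x_{ik} ⊗ x_{kj} and counit ε(x_{ij}) = δ_{ij}. Suppose l : O⁺(n) → ℂ is a Gaussian generator, i.e. there is an ε-cocycle η into a pre-Hilbert space with l(ab) = l(a)ε(b) + ε(a)l(b) + ⟨η(a*), η(b)⟩, l hermitian, and l is bi-invariant: (l ⊗ id)Δ = (id ⊗ l)Δ. Then l = 0 on the generators and on products of generators; in particular η(x_{ij}) = 0 for all i ≠ j and consequently l ≡ 0 on the augmentation ideal, i.e. there is no nonzero bi-invariant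 Gaussian generator on O⁺(n). -/
open TensorProduct
open scoped ComplexConjugate

noncomputable section

/-!
An `ε`-cocycle on `O⁺(n)` is antisymmetric on the generators (apply it to the column relations),
so it vanishes on the diagonal ones, and it vanishes everywhere once it vanishes on the
off-diagonal ones. Bi-invariance of `l` yields identities in `O⁺(n)` which, read in the
representation `x_{ab} ↦ δ_{ab} E_a` built from two anticommuting involutive `2 × 2` matrices,
give `l(x_{ij}) = 0` and `l(x_{ij} x_{ji}) = 0` for `i ≠ j`. The Gaussian formula then turns the
latter into `‖η(x_{ij})‖² = 0`, so `η = 0`, which makes `l` itself an `ε`-cocycle vanishing on the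
off-diagonal generators, hence `l = 0`.
-/

section Cocycle

variable {R A M : Type*} [CommRing R] [Ring A] [Algebra R A] [AddCommGroup M] [Module R M]
  {ε : A →ₐ[R] R} {η : A →ₗ[R] M}

theorem cocycle_map_one (hη : ∀ a b, η (a * b) = ε b • η a + ε a • η b) : η 1 = 0 := by
  simpa using hη 1 1

theorem cocycle_eq_zero_of_adjoin_eq_top (hη : ∀ a b, η (a * b) = ε b • η a + ε a • η b)
    {ι : Type*} {x : ι → A} (hx : Algebra.adjoin R (Set.range x) = ⊤) (h0 : ∀ i, η (x i) = 0) :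
    η = 0 := by
  refine LinearMap.ext fun a => ?_
  induction (hx ▸ Algebra.mem_top : a ∈ Algebra.adjoin R (Set.range x)) using
    Algebra.adjoin_induction with
  | mem _ h => obtain ⟨i, rfl⟩ := h; exact h0 i
  | algebraMap r => simp [Algebra.algebraMap_eq_smul_one, cocycle_map_one hη]
  | add a b _ _ ha hb => simp [ha, hb]
  | mul a b _ _ ha hb => simp [hη, ha, hb]

end Cocycle

namespace FreeOrth

variable {n : ℕ}

theorem adjoin_range_freeOrthX :
    Algebra.adjoin ℂ (Set.range fun p : Fin n × Fin n => freeOrthX p.1 p.2) = ⊤ := by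
  rw [← (AlgHom.range_eq_top _).mpr (RingQuot.mkAlgHom_surjective ℂ (FreeOrthRel n)),
    ← Algebra.map_top, ← FreeAlgebra.adjoin_range_ι, AlgHom.map_adjoin, ← Set.range_comp]
  rfl

theorem sum_freeOrthX_mul_freeOrthX (i j : Fin n) :
    ∑ k, freeOrthX k i * freeOrthX k j = if i = j then (1 : FreeOrth n) else 0 := by
  simpa [freeOrthX, apply_ite] using RingQuot.mkAlgHom_rel ℂ (FreeOrthRel.col i j)

def diagRep {A : Type*} [Ring A] [Algebra ℂ A] (E : Fin n → A) (hE : ∀ a, E a * E a = 1) :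
    FreeOrth n →ₐ[ℂ] A :=
  RingQuot.liftAlgHom ℂ ⟨FreeAlgebra.lift ℂ fun p => if p.1 = p.2 then E p.1 else 0,
    fun _ _ h => by cases h <;> simp +contextual [ite_mul, mul_ite, hE, eq_comm]⟩

theorem diagRep_freeOrthX {A : Type*} [Ring A] [Algebra ℂ A] (E : Fin n → A)
    (hE : ∀ a, E a * E a = 1) (i j : Fin n) :
    diagRep E hE (freeOrthX i j) = if i = j then E i else 0 := by
  simp [diagRep, freeOrthX]

section Cocycle

variable {M : Type*} [AddCommGroup M] [Module ℂ M]
  {ε : FreeOrth n →ₐ[ℂ] ℂ} {η : FreeOrth n →ₗ[ℂ] M}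

theorem cocycle_freeOrthX_add_swap
    (hε : ∀ i j : Fin n, ε (freeOrthX i j) = if i = j then 1 else 0)
    (hη : ∀ a b, η (a * b) = ε b • η a + ε a • η b) (i j : Fin n) :
    η (freeOrthX i j) + η (freeOrthX j i) = 0 := by
  have h := congrArg η (sum_freeOrthX_mul_freeOrthX i j)
  simp [hη, hε, ite_smul, Finset.sum_add_distrib, apply_ite η, cocycle_map_one hη] at h
  rwa [add_comm]

theorem cocycle_freeOrthX_self
    (hε : ∀ i j : Fin n, ε (freeOrthX i j) = if i = j then 1 else 0)
    (hη : ∀ a b, η (a * b) = ε b • η a + ε a • η b) (i : Fin n) : η (freeOrthX i i) = 0 := by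
  have h := cocycle_freeOrthX_add_swap hε hη i i
  rw [← two_smul ℂ] at h
  simpa using h

theorem cocycle_eq_zero_of_freeOrthX_eq_zero_of_ne
    (hε : ∀ i j : Fin n, ε (freeOrthX i j) = if i = j then 1 else 0)
    (hη : ∀ a b, η (a * b) = ε b • η a + ε a • η b)
    (h0 : ∀ i j : Fin n, i ≠ j → η (freeOrthX i j) = 0) : η = 0 := by
  refine cocycle_eq_zero_of_adjoin_eq_top hη adjoin_range_freeOrthX fun ⟨i, j⟩ => ?_
  rcases eq_or_ne i j with rfl | hij
  exacts [cocycle_freeOrthX_self hε hη i, h0 i j hij]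

end Cocycle

theorem cocycle_freeOrthX_eq_zero_of_generator_mul_eq_zero
    {D : Type*} [NormedAddCommGroup D] [InnerProductSpace ℂ D]
    {ε : FreeOrth n →ₐ[ℂ] ℂ} (hε : ∀ i j : Fin n, ε (freeOrthX i j) = if i = j then 1 else 0)
    {η : FreeOrth n →ₗ[ℂ] D} (hη : ∀ a b, η (a * b) = ε b • η a + ε a • η b)
    {st : FreeOrth n → FreeOrth n} (hst_gen : ∀ i j : Fin n, st (freeOrthX i j) = freeOrthX i j)
    {l : FreeOrth n →ₗ[ℂ] ℂ}
    (hl : ∀ a b, l (a * b) = l a * ε b + ε a * l b + inner ℂ (η (st a)) (η b))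
    {i j : Fin n} (hij : i ≠ j) (hl_ij : l (freeOrthX i j * freeOrthX j i) = 0) :
    η (freeOrthX i j) = 0 := by
  have h := hl (freeOrthX i j) (freeOrthX j i)
  rw [hl_ij, hst_gen, hε, hε, if_neg hij, if_neg hij.symm,
    eq_neg_of_add_eq_zero_right (cocycle_freeOrthX_add_swap hε hη i j)] at h
  simpa using h

section BiInvariant

variable {Δ : FreeOrth n →ₐ[ℂ] (FreeOrth n ⊗[ℂ] FreeOrth n)} {l : FreeOrth n →ₗ[ℂ] ℂ}

theorem sum_smul_freeOrthX_comm_of_biinvariant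
    (hΔ : ∀ i j : Fin n, Δ (freeOrthX i j) = ∑ k : Fin n, freeOrthX i k ⊗ₜ[ℂ] freeOrthX k j)
    (h_biinv : ∀ a : FreeOrth n,
      (TensorProduct.lid ℂ (FreeOrth n)) ((TensorProduct.map l LinearMap.id) (Δ a)) =
      (TensorProduct.rid ℂ (FreeOrth n)) ((TensorProduct.map LinearMap.id l) (Δ a)))
    (i j : Fin n) :
    ∑ k, l (freeOrthX i k) • freeOrthX k j = ∑ k, l (freeOrthX k j) • freeOrthX i k := by
  simpa [hΔ] using h_biinv (freeOrthX i j)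

theorem sum_smul_freeOrthX_mul_comm_of_biinvariant
    (hΔ : ∀ i j : Fin n, Δ (freeOrthX i j) = ∑ k : Fin n, freeOrthX i k ⊗ₜ[ℂ] freeOrthX k j)
    (h_biinv : ∀ a : FreeOrth n,
      (TensorProduct.lid ℂ (FreeOrth n)) ((TensorProduct.map l LinearMap.id) (Δ a)) =
      (TensorProduct.rid ℂ (FreeOrth n)) ((TensorProduct.map LinearMap.id l) (Δ a)))
    (i j k m : Fin n) :
    ∑ p, ∑ q, l (freeOrthX i p * freeOrthX k q) • (freeOrthX p j * freeOrthX q m) =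
      ∑ p, ∑ q, l (freeOrthX p j * freeOrthX q m) • (freeOrthX i p * freeOrthX k q) := by
  simpa [hΔ, Finset.sum_mul_sum, Algebra.TensorProduct.tmul_mul_tmul] using
    h_biinv (freeOrthX i j * freeOrthX k m)

theorem smul_diagRep_eq_of_biinvariant
    (hΔ : ∀ i j : Fin n, Δ (freeOrthX i j) = ∑ k : Fin n, freeOrthX i k ⊗ₜ[ℂ] freeOrthX k j)
    (h_biinv : ∀ a : FreeOrth n,
      (TensorProduct.lid ℂ (FreeOrth n)) ((TensorProduct.map l LinearMap.id) (Δ a)) =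
      (TensorProduct.rid ℂ (FreeOrth n)) ((TensorProduct.map LinearMap.id l) (Δ a)))
    {A : Type*} [Ring A] [Algebra ℂ A] (E : Fin n → A) (hE : ∀ a, E a * E a = 1) (i j : Fin n) :
    l (freeOrthX i j) • E j = l (freeOrthX i j) • E i ∧
      l (freeOrthX i j * freeOrthX j i) • (E j * E i) =
        l (freeOrthX i j * freeOrthX j i) • (E i * E j) := by
  constructor
  · simpa [diagRep_freeOrthX] using
      congrArg (diagRep E hE) (sum_smul_freeOrthX_comm_of_biinvariant hΔ h_biinv i j)
  · simpa [diagRep_freeOrthX, ite_mul, mul_ite] using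
      congrArg (diagRep E hE) (sum_smul_freeOrthX_mul_comm_of_biinvariant hΔ h_biinv i j j i)

theorem exists_involutions_not_commute :
    ∃ σ τ : Matrix (Fin 2) (Fin 2) ℂ, σ * σ = 1 ∧ τ * τ = 1 ∧ σ * τ ≠ τ * σ := by
  refine ⟨!![0, 1; 1, 0], !![1, 0; 0, -1], ?_, ?_, ?_⟩
  · simp [Matrix.one_fin_two]
  · simp [Matrix.one_fin_two]
  · intro h
    norm_num [Matrix.mul_fin_two] at h

theorem apply_freeOrthX_eq_zero_of_biinvariant
    (hΔ : ∀ i j : Fin n, Δ (freeOrthX i j) = ∑ k : Fin n, freeOrthX i k ⊗ₜ[ℂ] freeOrthX k j)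
    (h_biinv : ∀ a : FreeOrth n,
      (TensorProduct.lid ℂ (FreeOrth n)) ((TensorProduct.map l LinearMap.id) (Δ a)) =
      (TensorProduct.rid ℂ (FreeOrth n)) ((TensorProduct.map LinearMap.id l) (Δ a)))
    {i j : Fin n} (hij : i ≠ j) :
    l (freeOrthX i j) = 0 ∧ l (freeOrthX i j * freeOrthX j i) = 0 := by
  -- a character would make the second identity trivial: noncommuting values are needed
  obtain ⟨σ, τ, hσ, hτ, hστ⟩ := exists_involutions_not_commute
  have hE (a : Fin n) : (if a = i then σ else τ) * (if a = i then σ else τ) = 1 := by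
    split_ifs <;> assumption
  obtain ⟨h₁, h₂⟩ := smul_diagRep_eq_of_biinvariant hΔ h_biinv _ hE i j
  simp only [↓reduceIte, if_neg hij.symm] at h₁ h₂
  have eq_zero {X Y : Matrix (Fin 2) (Fin 2) ℂ} {c : ℂ} (h : c • X = c • Y) (hXY : X ≠ Y) :
      c = 0 :=
    not_not.mp fun hc => hXY ((smul_right_inj hc).mp h)
  exact ⟨eq_zero h₁ fun h => hστ (by rw [h]), eq_zero h₂ hστ.symm⟩

end BiInvariant

end FreeOrth

theorem freeOrth_no_biinvariant_gaussian_generator_general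
    (n : ℕ)
    -- the counit
    (ε : FreeOrth n →ₐ[ℂ] ℂ)
    (hε : ∀ i j : Fin n, ε (freeOrthX i j) = if i = j then 1 else 0)
    -- the coproduct
    (Δ : FreeOrth n →ₐ[ℂ] (FreeOrth n ⊗[ℂ] FreeOrth n))
    (hΔ : ∀ i j : Fin n, Δ (freeOrthX i j) = ∑ k : Fin n, freeOrthX i k ⊗ₜ[ℂ] freeOrthX k j)
    -- the *-structure, fixing the self-adjoint generators
    (st : FreeOrth n → FreeOrth n)
    (hst_gen : ∀ i j : Fin n, st (freeOrthX i j) = freeOrthX i j)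
    -- a Gaussian generator: hermitian `l` with `ε`-`ε`-cocycle `η`
    (D : Type*) [NormedAddCommGroup D] [InnerProductSpace ℂ D]
    (η : FreeOrth n →ₗ[ℂ] D)
    (hη : ∀ a b : FreeOrth n, η (a * b) = ε b • η a + ε a • η b)
    (l : FreeOrth n →ₗ[ℂ] ℂ)
    (hl : ∀ a b : FreeOrth n,
      l (a * b) = l a * ε b + ε a * l b + inner ℂ (η (st a)) (η b))
    -- bi-invariance: (l ⊗ id)∘Δ = (id ⊗ l)∘Δ
    (h_biinv : ∀ a : FreeOrth n,
      (TensorProduct.lid ℂ (FreeOrth n)) ((TensorProduct.map l LinearMap.id) (Δ a)) =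
      (TensorProduct.rid ℂ (FreeOrth n)) ((TensorProduct.map LinearMap.id l) (Δ a))) :
    (∀ i j : Fin n, i ≠ j → η (freeOrthX i j) = 0) ∧ (∀ a : FreeOrth n, l a = 0) := by
  have hη_ne : ∀ i j : Fin n, i ≠ j → η (freeOrthX i j) = 0 := fun _ _ hij =>
    FreeOrth.cocycle_freeOrthX_eq_zero_of_generator_mul_eq_zero hε hη hst_gen hl hij
      (FreeOrth.apply_freeOrthX_eq_zero_of_biinvariant hΔ h_biinv hij).2
  have hη_zero : η = 0 := FreeOrth.cocycle_eq_zero_of_freeOrthX_eq_zero_of_ne hε hη hη_ne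
  have hl_cocycle : ∀ a b, l (a * b) = ε b • l a + ε a • l b := fun a b => by
    rw [hl, hη_zero]
    simp only [LinearMap.zero_apply, inner_zero_left, add_zero, smul_eq_mul]
    ring
  have hl_zero : l = 0 := FreeOrth.cocycle_eq_zero_of_freeOrthX_eq_zero_of_ne hε hl_cocycle
    fun _ _ hij => (FreeOrth.apply_freeOrthX_eq_zero_of_biinvariant hΔ h_biinv hij).1
  exact ⟨hη_ne, fun a => by rw [hl_zero, LinearMap.zero_apply]⟩

/-- There is no nonzero bi-invariant Gaussian generator on the free orthogonal quantum
group `O⁺(n)`: any hermitian functional `l` with Gaussian cocycle `η` which is bi-invariant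
with respect to the coproduct `Δ(x_{ij}) = Σ_k x_{ik} ⊗ x_{kj}` vanishes identically, and
`η` vanishes on the off-diagonal generators. -/
theorem freeOrth_no_biinvariant_gaussian_generator
    (n : ℕ) (hn : 2 ≤ n)
    -- the counit
    (ε : FreeOrth n →ₐ[ℂ] ℂ)
    (hε : ∀ i j : Fin n, ε (freeOrthX i j) = if i = j then 1 else 0)
    -- the coproduct
    (Δ : FreeOrth n →ₐ[ℂ] (FreeOrth n ⊗[ℂ] FreeOrth n))
    (hΔ : ∀ i j : Fin n, Δ (freeOrthX i j) = ∑ k : Fin n, freeOrthX i k ⊗ₜ[ℂ] freeOrthX k j)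
    -- the *-structure, fixing the self-adjoint generators
    (st : FreeOrth n → FreeOrth n)
    (hst_add : ∀ a b : FreeOrth n, st (a + b) = st a + st b)
    (hst_mul : ∀ a b : FreeOrth n, st (a * b) = st b * st a)
    (hst_smul : ∀ (c : ℂ) (a : FreeOrth n), st (c • a) = (conj c) • st a)
    (hst_invol : ∀ a : FreeOrth n, st (st a) = a)
    (hst_gen : ∀ i j : Fin n, st (freeOrthX i j) = freeOrthX i j)
    -- a Gaussian generator: hermitian `l` with `ε`-`ε`-cocycle `η`
    (D : Type*) [NormedAddCommGroup D] [InnerProductSpace ℂ D]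
    (η : FreeOrth n →ₗ[ℂ] D)
    (hη : ∀ a b : FreeOrth n, η (a * b) = ε b • η a + ε a • η b)
    (l : FreeOrth n →ₗ[ℂ] ℂ)
    (hl_herm : ∀ a : FreeOrth n, l (st a) = conj (l a))
    (hl : ∀ a b : FreeOrth n,
      l (a * b) = l a * ε b + ε a * l b + inner ℂ (η (st a)) (η b))
    -- bi-invariance: (l ⊗ id)∘Δ = (id ⊗ l)∘Δ
    (h_biinv : ∀ a : FreeOrth n,
      (TensorProduct.lid ℂ (FreeOrth n)) ((TensorProduct.map l LinearMap.id) (Δ a)) =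
      (TensorProduct.rid ℂ (FreeOrth n)) ((TensorProduct.map LinearMap.id l) (Δ a))) :
    (∀ i j : Fin n, i ≠ j → η (freeOrthX i j) = 0) ∧ (∀ a : FreeOrth n, l a = 0) :=
  freeOrth_no_biinvariant_gaussian_generator_general n ε hε Δ hΔ st hst_gen D η hη l hl h_biinv
end
end
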